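/- arXiv:1911.08282 — 3 statements merged into one kernel-verified Lean document; each statement's English description precedes it below -/
import Mathlib

section
/- Let M be a left 𝕆-module and let x₁, …, xₙ ∈ 𝒜(M) be associative elements that are ℝ-linearly independent. If r₁, …, rₙ ∈ 𝕆 satisfy Σᵢ rᵢxᵢ = 0, then rᵢ = 0 for every i. Consequently, a subset S ⊆ 𝒜(M) is 𝕆-linearly independent if and only if it is ℝ-linearly independent. -/
noncomputable section

open scoped Quaternion

/-- The octonions, realized as pairs of quaternions via the Cayley–Dickson construction. -/
def Octo : Type := ℍ[ℝ] × ℍ[ℝ]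

namespace Octo

instance : AddCommGroup Octo := inferInstanceAs (AddCommGroup (ℍ[ℝ] × ℍ[ℝ]))
instance : Module ℝ Octo := inferInstanceAs (Module ℝ (ℍ[ℝ] × ℍ[ℝ]))

/-- Build an octonion from a pair of quaternions. -/
def mk (a b : ℍ[ℝ]) : Octo := (a, b)

/-- First quaternion component. -/
def p1 (x : Octo) : ℍ[ℝ] := (show ℍ[ℝ] × ℍ[ℝ] from x).1

/-- Second quaternion component. -/
def p2 (x : Octo) : ℍ[ℝ] := (show ℍ[ℝ] × ℍ[ℝ] from x).2

/-- Cayley–Dickson multiplication: `(a,b)(c,d) = (ac − d̄b, da + bc̄)`. -/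
instance : Mul Octo :=
  ⟨fun x y => mk (p1 x * p1 y - star (p2 y) * p2 x) (p2 y * p1 x + p2 x * star (p1 y))⟩

instance : One Octo := ⟨mk 1 0⟩

/-- Octonion conjugation: for `x = (a,b)`, `x̄ = (ā, −b)`. -/
def conj (x : Octo) : Octo := mk (star (p1 x)) (-(p2 x))

/-- The octonion associator `[x,y,z] = (xy)z − x(yz)`. -/
def assoc (x y z : Octo) : Octo := x * y * z - x * (y * z)

/-- The octonion commutator `[x,y] = xy − yx`. -/
def comm (x y : Octo) : Octo := x * y - y * x

/-- The canonical embedding of the reals into the octonions. -/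
def ofReal (r : ℝ) : Octo := r • (1 : Octo)

end Octo

section OMod

variable {M : Type*} [AddCommGroup M] [Module ℝ M]
variable {N : Type*} [AddCommGroup N] [Module ℝ N]

/-- `IsOMod sm` says that the scalar multiplication `sm : 𝕆 × M → M` makes the real vector
space `M` a left 𝕆-module: `sm` is ℝ-bilinear, unital, and the left associator is
alternating in its two octonion arguments. -/
structure IsOMod (sm : Octo → M → M) : Prop where
  smul_add : ∀ (p : Octo) (m n : M), sm p (m + n) = sm p m + sm p n
  add_smul : ∀ (p q : Octo) (m : M), sm (p + q) m = sm p m + sm q m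
  real_smul : ∀ (r : ℝ) (p : Octo) (m : M), sm (r • p) m = r • sm p m
  smul_real : ∀ (r : ℝ) (p : Octo) (m : M), sm p (r • m) = r • sm p m
  one_smul : ∀ m : M, sm 1 m = m
  alt : ∀ (p q : Octo) (m : M),
    sm (p * q) m - sm p (sm q m) = -(sm (q * p) m - sm q (sm p m))

/-- The left associator `[p,q,m] = (pq)m − p(qm)`. -/
def oLassoc (sm : Octo → M → M) (p q : Octo) (m : M) : M :=
  sm (p * q) m - sm p (sm q m)

/-- The set `𝒜(M)` of associative elements: `[p,q,m] = 0` for all `p,q ∈ 𝕆`. -/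
def assocSet (sm : Octo → M → M) : Set M :=
  {m | ∀ p q : Octo, oLassoc sm p q m = 0}

/-- The set `𝒜⁻(M)` of conjugate associative elements: `(pq)m = q(pm)` for all `p,q ∈ 𝕆`. -/
def conjAssocSet (sm : Octo → M → M) : Set M :=
  {m | ∀ p q : Octo, sm (p * q) m = sm q (sm p m)}

/-- A homomorphism of left 𝕆-modules: an ℝ-linear map commuting with 𝕆-scalar
multiplication. -/
def IsOHom (sm : Octo → M → M) (sm' : Octo → N → N) (f : M → N) : Prop :=
  IsLinearMap ℝ f ∧ ∀ (p : Octo) (m : M), f (sm p m) = sm' p (f m)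

/-- Two left 𝕆-modules are isomorphic if there is a bijective homomorphism between them. -/
def OIso (sm : Octo → M → M) (sm' : Octo → N → N) : Prop :=
  ∃ f : M → N, IsOHom sm sm' f ∧ Function.Bijective f

/-- A submodule: a real subspace closed under 𝕆-scalar multiplication. -/
structure IsOSubmodule (sm : Octo → M → M) (S : Set M) : Prop where
  zero_mem : (0 : M) ∈ S
  add_mem : ∀ {x y : M}, x ∈ S → y ∈ S → x + y ∈ S
  smul_mem : ∀ (r : ℝ) {x : M}, x ∈ S → r • x ∈ S
  osmul_mem : ∀ (p : Octo) {x : M}, x ∈ S → sm p x ∈ S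

/-- `⟨m⟩_𝕆`, the smallest submodule containing `m`, as a set. -/
def genSet (sm : Octo → M → M) (m : M) : Set M :=
  ⋂₀ {S : Set M | IsOSubmodule sm S ∧ m ∈ S}

/-- An element `m` is cyclic if `⟨m⟩_𝕆 = 𝕆m`. -/
def IsOCyclic (sm : Octo → M → M) (m : M) : Prop :=
  genSet sm m = {x | ∃ p : Octo, x = sm p m}

/-- 𝕆-linear independence of a subset `S ⊆ M`: any finite 𝕆-linear combination of
distinct elements of `S` that vanishes has all coefficients zero. -/
def OLinIndep (sm : Octo → M → M) (S : Set M) : Prop :=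
  ∀ (n : ℕ) (s : Fin n → M) (r : Fin n → Octo), Function.Injective s → (∀ i, s i ∈ S) →
    (∑ i, sm (r i) (s i)) = 0 → ∀ i, r i = 0

end OMod

/-- The canonical left 𝕆-module structure on 𝕆 itself. -/
def oSmul : Octo → Octo → Octo := fun p x => p * x

/-- The left 𝕆-module structure `𝕆̄` on 𝕆: `p ·̂ x = p̄x`. -/
def oBarSmul : Octo → Octo → Octo := fun p x => Octo.conj p * x


/-! For an associative element `y`, the map `p ↦ p y` is a homomorphism from `𝕆` to `M`, so any
operator built from left multiplications acts on `𝕆 y` as it acts on `𝕆`. One such operator is the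
real part: on `𝕆`, `Re p = (p − Σ a(b(c p)))/8`, summed over the seven lines `ab = c` of the Fano
plane. Applying `Re ∘ q` to `Σ rᵢ xᵢ = 0` gives `Σ Re(q rᵢ) xᵢ = 0`, hence `Re(q rᵢ) = 0` for all
`q` by real independence, and `q = r̄ᵢ` yields `|rᵢ|² = 0`. -/

namespace Octo

@[simp] lemma p1_mk (a b : ℍ[ℝ]) : (mk a b).p1 = a := rfl
@[simp] lemma p2_mk (a b : ℍ[ℝ]) : (mk a b).p2 = b := rfl
@[simp] lemma p1_mul (x y : Octo) : (x * y).p1 = x.p1 * y.p1 - star y.p2 * x.p2 := rfl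
@[simp] lemma p2_mul (x y : Octo) : (x * y).p2 = y.p2 * x.p1 + x.p2 * star y.p1 := rfl
@[simp] lemma p1_one : (1 : Octo).p1 = 1 := rfl
@[simp] lemma p2_one : (1 : Octo).p2 = 0 := rfl
@[simp] lemma p1_zero : (0 : Octo).p1 = 0 := rfl
@[simp] lemma p2_zero : (0 : Octo).p2 = 0 := rfl
@[simp] lemma p1_add (x y : Octo) : (x + y).p1 = x.p1 + y.p1 := rfl
@[simp] lemma p2_add (x y : Octo) : (x + y).p2 = x.p2 + y.p2 := rfl
@[simp] lemma p1_sub (x y : Octo) : (x - y).p1 = x.p1 - y.p1 := rfl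
@[simp] lemma p2_sub (x y : Octo) : (x - y).p2 = x.p2 - y.p2 := rfl
@[simp] lemma p1_smul (r : ℝ) (x : Octo) : (r • x).p1 = r • x.p1 := rfl
@[simp] lemma p2_smul (r : ℝ) (x : Octo) : (r • x).p2 = r • x.p2 := rfl
@[simp] lemma p1_conj (x : Octo) : (conj x).p1 = star x.p1 := rfl
@[simp] lemma p2_conj (x : Octo) : (conj x).p2 = -x.p2 := rfl

@[ext] lemma ext {x y : Octo} (h1 : x.p1 = y.p1) (h2 : x.p2 = y.p2) : x = y := Prod.ext h1 h2

def re (x : Octo) : ℝ := x.p1.re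

lemma re_conj_mul_self (x : Octo) :
    (conj x * x).re = Quaternion.normSq x.p1 + Quaternion.normSq x.p2 := by
  simp [re, Quaternion.star_mul_self]

lemma eq_zero_of_forall_re_mul_eq_zero {r : Octo} (h : ∀ q, (q * r).re = 0) : r = 0 := by
  have hr := h (conj r)
  rw [re_conj_mul_self] at hr
  have h1 := Quaternion.normSq_nonneg (a := r.p1)
  have h2 := Quaternion.normSq_nonneg (a := r.p2)
  ext : 1 <;> simp only [p1_zero, p2_zero, ← Quaternion.normSq_eq_zero] <;> linarith

lemma ofReal_eq_zero {a : ℝ} : ofReal a = 0 ↔ a = 0 :=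
  ⟨fun h => by simpa [ofReal, re] using congrArg re h, fun h => by simp [h, ofReal]⟩

-- Named constants: an anonymous constructor `⟨_, _, _, _⟩` elaborates at the type
-- `QuaternionAlgebra ℝ (-1) 0 (-1)`, which is not reducibly `ℍ[ℝ]`, and the `Quaternion` simp
-- lemmas then fail to fire.
def qi : ℍ[ℝ] := ⟨0, 1, 0, 0⟩
def qj : ℍ[ℝ] := ⟨0, 0, 1, 0⟩
def qk : ℍ[ℝ] := ⟨0, 0, 0, 1⟩

def e₁ : Octo := mk qi 0
def e₂ : Octo := mk qj 0
def e₃ : Octo := mk qk 0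
def e₄ : Octo := mk 0 1
def e₅ : Octo := mk 0 qi
def e₆ : Octo := mk 0 qj
def e₇ : Octo := mk 0 qk

/-- The lines of the Fano plane, each ordered as `(a, b, c)` with `a * b = c`. -/
def fanoTriples : Fin 7 → Octo × Octo × Octo :=
  ![(e₁, e₂, e₃), (e₁, e₄, e₅), (e₁, e₇, e₆), (e₂, e₄, e₆), (e₂, e₅, e₇), (e₃, e₄, e₇),
    (e₃, e₆, e₅)]

end Octo

theorem linearIndependent_subtype_iff_forall_fin {R M : Type*} [Semiring R] [AddCommMonoid M]
    [Module R M] {S : Set M} :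
    LinearIndependent R ((↑) : S → M) ↔ ∀ (n : ℕ) (s : Fin n → M), Function.Injective s →
      (∀ i, s i ∈ S) → LinearIndependent R s := by
  refine ⟨fun hS n s hinj hmem => hS.comp (fun i => ⟨s i, hmem i⟩)
    fun i j hij => hinj (congrArg Subtype.val hij), fun H => ?_⟩
  rw [linearIndependent_iff_finset_linearIndependent]
  intro t
  let e := t.equivFin.symm
  exact (linearIndependent_equiv e).mp <| H t.card (fun k => ((e k : S) : M))
    (fun k l hkl => e.injective (Subtype.ext (Subtype.ext hkl))) fun k => (e k : S).2

section OMod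

variable {M : Type*} [AddCommGroup M] [Module ℝ M]
variable {N : Type*} [AddCommGroup N] [Module ℝ N]

/-- On `𝕆`, each `a(b(c ·))` sends `1` to `-1` and an imaginary unit `e` to `-e` or `e`
according as `e` lies on the line `(a, b, c)` or not; every unit lies on three of the seven
lines, so the sum is `-7` on `ℝ` and the identity on `Im 𝕆`. -/
def oRe (sm : Octo → M → M) (m : M) : M :=
  (8 : ℝ)⁻¹ • (m - ∑ t, sm (Octo.fanoTriples t).1
    (sm (Octo.fanoTriples t).2.1 (sm (Octo.fanoTriples t).2.2 m)))

lemma oRe_oSmul (p : Octo) : oRe oSmul p = p.re • 1 := by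
  simp only [oRe, Fin.sum_univ_seven, Octo.fanoTriples, Matrix.cons_val]
  ext : 1 <;>
  simp only [oSmul, Octo.e₁, Octo.e₂, Octo.e₃, Octo.e₄, Octo.e₅, Octo.e₆, Octo.e₇, Octo.p1_mul,
    Octo.p2_mul, Octo.p1_mk, Octo.p2_mk, Octo.p1_smul, Octo.p2_smul, Octo.p1_add, Octo.p2_add,
    Octo.p1_sub, Octo.p2_sub, Octo.p1_one, Octo.p2_one, Octo.re, mul_zero, zero_mul, mul_one,
    one_mul, sub_zero, zero_sub, add_zero, zero_add] <;>
  apply Quaternion.ext <;>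
  simp [Quaternion.re_mul, Quaternion.imI_mul, Quaternion.imJ_mul, Quaternion.imK_mul] <;>
  simp only [Octo.qi, Octo.qj, Octo.qk] <;>
  ring

lemma IsOHom.map_oRe {sm : Octo → M → M} {sm' : Octo → N → N} {f : M → N}
    (hf : IsOHom sm sm' f) (m : M) : f (oRe sm m) = oRe sm' (f m) := by
  let F : M →ₗ[ℝ] N := hf.1.mk'
  change F (oRe sm m) = oRe sm' (F m)
  simp only [oRe, map_smul, map_sub, map_sum]
  simp only [F, IsLinearMap.mk'_apply, hf.2]

namespace IsOMod

variable {sm : Octo → M → M}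

lemma isLinearMap_smul (h : IsOMod sm) (p : Octo) : IsLinearMap ℝ (sm p) :=
  ⟨h.smul_add p, fun r m => h.smul_real r p m⟩

lemma smul_sum (h : IsOMod sm) {ι : Type*} (s : Finset ι) (p : Octo) (f : ι → M) :
    sm p (∑ i ∈ s, f i) = ∑ i ∈ s, sm p (f i) :=
  map_sum ((h.isLinearMap_smul p).mk' _) f s

lemma ofReal_smul (h : IsOMod sm) (a : ℝ) (m : M) : sm (Octo.ofReal a) m = a • m := by
  rw [Octo.ofReal, h.real_smul, h.one_smul]

lemma isLinearMap_oRe (h : IsOMod sm) : IsLinearMap ℝ (oRe sm) where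
  map_add x y := by
    simp only [oRe, h.smul_add, Finset.sum_add_distrib]
    module
  map_smul r x := by
    simp only [oRe, h.smul_real, ← Finset.smul_sum]
    module

lemma isOHom_smul_left (h : IsOMod sm) {y : M} (hy : y ∈ assocSet sm) :
    IsOHom oSmul sm (fun p => sm p y) :=
  ⟨⟨fun p q => h.add_smul p q y, fun r p => h.real_smul r p y⟩,
    fun p q => sub_eq_zero.mp (hy p q)⟩

lemma oRe_smul_of_mem_assocSet (h : IsOMod sm) {y : M} (hy : y ∈ assocSet sm) (p : Octo) :
    oRe sm (sm p y) = p.re • y := by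
  rw [← (h.isOHom_smul_left hy).map_oRe, oRe_oSmul, h.real_smul, h.one_smul]

theorem eq_zero_of_sum_smul_eq_zero (h : IsOMod sm) {ι : Type*} [Fintype ι] {x : ι → M}
    {r : ι → Octo} (hx : ∀ i, x i ∈ assocSet sm) (hli : LinearIndependent ℝ x)
    (hsum : ∑ i, sm (r i) (x i) = 0) (i : ι) : r i = 0 := by
  have hre (q : Octo) : ∑ j, (q * r j).re • x j = 0 := calc
    ∑ j, (q * r j).re • x j = ∑ j, oRe sm (sm q (sm (r j) (x j))) := by
      refine Finset.sum_congr rfl fun j _ => ?_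
      rw [← sub_eq_zero.mp (hx j q (r j)), h.oRe_smul_of_mem_assocSet (hx j)]
    _ = oRe sm (sm q (∑ j, sm (r j) (x j))) := by
      rw [h.smul_sum]
      exact (map_sum (h.isLinearMap_oRe.mk' _) _ _).symm
    _ = 0 := by rw [hsum, (h.isLinearMap_smul q).map_zero, h.isLinearMap_oRe.map_zero]
  exact Octo.eq_zero_of_forall_re_mul_eq_zero fun q =>
    Fintype.linearIndependent_iff.mp hli _ (hre q) i

theorem linearIndependent_of_forall_sum_smul_eq_zero (h : IsOMod sm) {ι : Type*} [Fintype ι]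
    {x : ι → M} (hx : ∀ r : ι → Octo, ∑ i, sm (r i) (x i) = 0 → ∀ i, r i = 0) :
    LinearIndependent ℝ x :=
  Fintype.linearIndependent_iff.mpr fun g hg i => Octo.ofReal_eq_zero.mp <|
    hx (fun j => Octo.ofReal (g j)) (by simpa only [h.ofReal_smul] using hg) i

end IsOMod

end OMod

/-- If `x₁,…,xₙ ∈ 𝒜(M)` are ℝ-linearly independent and `Σ rᵢxᵢ = 0` with
`rᵢ ∈ 𝕆`, then all `rᵢ = 0`. Consequently a subset `S ⊆ 𝒜(M)` is 𝕆-linearly independent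
iff it is ℝ-linearly independent. -/
theorem stmt9 {M : Type*} [AddCommGroup M] [Module ℝ M]
    (sm : Octo → M → M) (h : IsOMod sm) :
    (∀ (n : ℕ) (x : Fin n → M) (r : Fin n → Octo),
      (∀ i, x i ∈ assocSet sm) → LinearIndependent ℝ x →
      (∑ i, sm (r i) (x i)) = 0 → ∀ i, r i = 0) ∧
    (∀ S : Set M, S ⊆ assocSet sm →
      (OLinIndep sm S ↔ LinearIndependent ℝ ((↑) : S → M))) := by
  refine ⟨fun n x r hx hli hsum => h.eq_zero_of_sum_smul_eq_zero hx hli hsum, fun S hS => ?_⟩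
  rw [linearIndependent_subtype_iff_forall_fin]
  refine forall_congr' fun n => forall_congr' fun s =>
    ⟨fun hO hinj hmem => ?_, fun hli r hinj hmem => ?_⟩
  · exact h.linearIndependent_of_forall_sum_smul_eq_zero fun r => hO r hinj hmem
  · exact h.eq_zero_of_sum_smul_eq_zero (fun i => hS (hmem i)) (hli hinj hmem)
end
end

section
/- Every homomorphism of left 𝕆-modules from 𝕆 to itself is a real scalar multiple of the identity: Hom_𝕆(𝕆,𝕆) = ℝ·Id. Likewise Hom_𝕆(𝕆̄,𝕆̄) = ℝ·Id, and Hom_𝕆(𝕆,𝕆̄) = {0}. -/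
noncomputable section

open scoped Quaternion

/-!
A homomorphism `f` out of `𝕆` is determined by `a = f 1`: `f x = f (x * 1)` is `x a`, or `x̄ a`
when the target is `𝕆̄`. Compatibility with products then says `(pq)a = p(qa)` for all `p, q`,
respectively `(pq)a = q(pa)`. Write `a = (a₁, a₂)` and test against `p, q ∈ ℍ × {0}` and
`ℓ = (0, 1)`. In the first case `a₂` annihilates the commutators of `ℍ` and `ā₁` is central
in `ℍ`, so `a` is real; in the second case `a₁` and `ā₂` are both killed by commutators of `ℍ`,
so `a = 0`. Finally `Hom_𝕆(𝕆̄, 𝕆̄) = Hom_𝕆(𝕆, 𝕆)` because `p ↦ p̄` is a bijection of `𝕆`.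
-/

namespace Quaternion

-- A bare literal `⟨0, 1, 0, 0⟩` elaborates at type `ℍ[ℝ,-1,0,-1]` with a syntactically
-- different `-1`, on which the `Quaternion` simp lemmas do not fire.
@[simps] def unitI : ℍ[ℝ] := ⟨0, 1, 0, 0⟩
@[simps] def unitJ : ℍ[ℝ] := ⟨0, 0, 1, 0⟩

lemma unitI_mul_unitJ_sub_ne_zero : unitI * unitJ - unitJ * unitI ≠ 0 := by
  norm_num [Quaternion.ext_iff]

lemma eq_zero_of_forall_mul_mul_comm_left {z : ℍ[ℝ]}
    (h : ∀ u v : ℍ[ℝ], u * v * z = v * u * z) : z = 0 := by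
  have hij := h unitI unitJ
  rw [← sub_eq_zero, ← sub_mul] at hij
  exact (mul_eq_zero.1 hij).resolve_left unitI_mul_unitJ_sub_ne_zero

lemma eq_zero_of_forall_mul_mul_comm_right {z : ℍ[ℝ]}
    (h : ∀ u v : ℍ[ℝ], z * (u * v) = z * (v * u)) : z = 0 := by
  have hij := h unitI unitJ
  rw [← sub_eq_zero, ← mul_sub] at hij
  exact (mul_eq_zero.1 hij).resolve_right unitI_mul_unitJ_sub_ne_zero

lemma eq_zero_of_forall_mul_eq_star_mul {z : ℍ[ℝ]} (h : ∀ u : ℍ[ℝ], z * u = star u * z) :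
    z = 0 := by
  refine eq_zero_of_forall_mul_mul_comm_left fun s t => ?_
  calc s * t * z = star (star t * star s) * z := by rw [star_mul, star_star, star_star]
    _ = z * (star t * star s) := (h _).symm
    _ = t * s * z := by rw [← mul_assoc, h, mul_assoc, h, ← mul_assoc, star_star, star_star]

lemma eq_coe_re_of_forall_commute {a : ℍ[ℝ]} (h : ∀ u : ℍ[ℝ], u * a = a * u) :
    a = (a.re : ℍ[ℝ]) := by
  have hi : -a.imK = a.imK ∧ a.imJ = -a.imJ := by simpa [Quaternion.ext_iff] using h unitI
  have hj : a.imK = -a.imK ∧ -a.imI = a.imI := by simpa [Quaternion.ext_iff] using h unitJ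
  ext <;> simp only [re_coe, imI_coe, imJ_coe, imK_coe] <;> linarith

end Quaternion

namespace Octo

lemma exists_eq_mk (x : Octo) : ∃ a b, x = mk a b := ⟨p1 x, p2 x, rfl⟩

lemma mk_eq_mk {a b c d : ℍ[ℝ]} : mk a b = mk c d ↔ a = c ∧ b = d := Prod.ext_iff

lemma mk_mul_mk (a b c d : ℍ[ℝ]) :
    mk a b * mk c d = mk (a * c - star d * b) (d * a + b * star c) := rfl

lemma one_def : (1 : Octo) = mk 1 0 := rfl

lemma zero_def : (0 : Octo) = mk 0 0 := rfl

lemma smul_mk (c : ℝ) (a b : ℍ[ℝ]) : c • mk a b = mk (c • a) (c • b) := rfl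

lemma conj_mk (a b : ℍ[ℝ]) : conj (mk a b) = mk (star a) (-b) := rfl

lemma mk_snd_zero_mul (u a b : ℍ[ℝ]) : mk u 0 * mk a b = mk (u * a) (b * u) := by
  simp [mk_mul_mk]

lemma mk_fst_zero_mul (u a b : ℍ[ℝ]) : mk 0 u * mk a b = mk (-(star b * u)) (u * star a) := by
  simp [mk_mul_mk]

protected lemma mul_one (x : Octo) : x * 1 = x := by
  obtain ⟨a, b, rfl⟩ := exists_eq_mk x
  simp [one_def, mk_mul_mk]

protected lemma mul_zero (x : Octo) : x * 0 = 0 := by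
  obtain ⟨a, b, rfl⟩ := exists_eq_mk x
  simp [zero_def, mk_mul_mk]

protected lemma mul_smul_comm (c : ℝ) (x y : Octo) : x * (c • y) = c • (x * y) := by
  obtain ⟨a, b, rfl⟩ := exists_eq_mk x
  obtain ⟨a', b', rfl⟩ := exists_eq_mk y
  simp [smul_mk, mk_mul_mk, smul_sub, smul_add]

lemma conj_involutive : Function.Involutive conj := fun x => by
  obtain ⟨a, b, rfl⟩ := exists_eq_mk x
  simp [conj_mk]

lemma conj_mul (x y : Octo) : conj (x * y) = conj y * conj x := by
  obtain ⟨a, b, rfl⟩ := exists_eq_mk x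
  obtain ⟨a', b', rfl⟩ := exists_eq_mk y
  simp [conj_mk, mk_mul_mk, add_comm]

theorem eq_smul_one_of_forall_mul_mul_assoc {x : Octo}
    (h : ∀ p q : Octo, p * q * x = p * (q * x)) : ∃ c : ℝ, x = c • 1 := by
  obtain ⟨a, b, rfl⟩ := exists_eq_mk x
  have hb : b = 0 := Quaternion.eq_zero_of_forall_mul_mul_comm_right fun u v => by
    have huv := h (mk u 0) (mk v 0)
    simp only [mk_snd_zero_mul, zero_mul, mk_eq_mk] at huv
    exact huv.2.trans (mul_assoc _ _ _)
  have ha : ∀ u, u * star a = star a * u := fun u => by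
    have huℓ := h (mk u 0) (mk 0 1)
    simp only [mk_snd_zero_mul, mk_fst_zero_mul, mul_zero, one_mul, mul_one, mul_neg, mk_eq_mk]
      at huℓ
    exact huℓ.2
  have hre : a = (a.re : ℍ[ℝ]) := by
    simpa using congrArg star (Quaternion.eq_coe_re_of_forall_commute ha)
  refine ⟨a.re, ?_⟩
  rw [hb, one_def, smul_mk, smul_zero, mk_eq_mk]
  exact ⟨hre.trans (Algebra.algebraMap_eq_smul_one a.re), rfl⟩

theorem eq_zero_of_forall_mul_mul_swap {x : Octo}
    (h : ∀ p q : Octo, p * q * x = q * (p * x)) : x = 0 := by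
  obtain ⟨a, b, rfl⟩ := exists_eq_mk x
  have ha : a = 0 := Quaternion.eq_zero_of_forall_mul_mul_comm_left fun u v => by
    have huv := h (mk u 0) (mk v 0)
    simp only [mk_snd_zero_mul, zero_mul, mk_eq_mk] at huv
    rw [huv.1, mul_assoc]
  have hb : star b = 0 := Quaternion.eq_zero_of_forall_mul_eq_star_mul fun u => by
    have huℓ := h (mk u 0) (mk 0 1)
    simp only [mk_snd_zero_mul, mk_fst_zero_mul, mul_zero, one_mul, mul_one, star_mul, mk_eq_mk,
      neg_inj] at huℓ
    exact huℓ.1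
  rw [ha, star_eq_zero.1 hb, zero_def]

end Octo

section Hom

variable {f : Octo → Octo}

theorem isOHom_oSmul_oSmul_iff : IsOHom oSmul oSmul f ↔ ∃ c : ℝ, f = fun x => c • x := by
  constructor
  · rintro ⟨-, hf⟩
    have hf1 (x : Octo) : f x = x * f 1 := by simpa [oSmul, Octo.mul_one] using hf x 1
    obtain ⟨c, hc⟩ := Octo.eq_smul_one_of_forall_mul_mul_assoc fun p q => by
      rw [← hf1, ← hf1]
      exact hf p q
    exact ⟨c, funext fun x => by rw [hf1, hc, Octo.mul_smul_comm, Octo.mul_one]⟩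
  · rintro ⟨c, rfl⟩
    exact ⟨IsLinearMap.isLinearMap_smul c, fun p x => (Octo.mul_smul_comm c p x).symm⟩

theorem isOHom_oBarSmul_oBarSmul_iff : IsOHom oBarSmul oBarSmul f ↔ IsOHom oSmul oSmul f :=
  and_congr_right fun _ =>
    (Octo.conj_involutive.surjective.forall (p := fun p => ∀ m, f (p * m) = p * f m)).symm

theorem isOHom_oSmul_oBarSmul_iff : IsOHom oSmul oBarSmul f ↔ f = fun _ => 0 := by
  constructor
  · rintro ⟨-, hf⟩
    have hf1 (x : Octo) : f x = Octo.conj x * f 1 := by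
      simpa [oSmul, oBarSmul, Octo.mul_one] using hf x 1
    have h0 := Octo.eq_zero_of_forall_mul_mul_swap fun p q => by
      simpa only [oSmul, oBarSmul, hf1 (Octo.conj p), hf1 (Octo.conj q * Octo.conj p),
        Octo.conj_mul, Octo.conj_involutive _] using hf (Octo.conj q) (Octo.conj p)
    exact funext fun x => by rw [hf1, h0, Octo.mul_zero]
  · rintro rfl
    exact ⟨⟨fun _ _ => (add_zero 0).symm, fun _ _ => (smul_zero _).symm⟩,
      fun p _ => (Octo.mul_zero (Octo.conj p)).symm⟩

end Hom

/-- `Hom_𝕆(𝕆,𝕆) = ℝ·Id`, `Hom_𝕆(𝕆̄,𝕆̄) = ℝ·Id`, and `Hom_𝕆(𝕆,𝕆̄) = {0}`. -/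
theorem stmt14 :
    ({f : Octo → Octo | IsOHom oSmul oSmul f} = {f | ∃ c : ℝ, f = fun x => c • x}) ∧
    ({f : Octo → Octo | IsOHom oBarSmul oBarSmul f} = {f | ∃ c : ℝ, f = fun x => c • x}) ∧
    ({f : Octo → Octo | IsOHom oSmul oBarSmul f} = {fun _ => (0 : Octo)}) := by
  refine ⟨?_, ?_, ?_⟩ <;> ext f
  · exact isOHom_oSmul_oSmul_iff
  · exact isOHom_oBarSmul_oBarSmul_iff.trans isOHom_oSmul_oSmul_iff
  · exact isOHom_oSmul_oBarSmul_iff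
end
end

section
/- Let M be a left 𝕆-module. An element m ∈ M is cyclic if and only if for all r, p ∈ 𝕆 there exists q ∈ 𝕆 such that [r,p,m] = qm, where [r,p,m] = (rp)m − r(pm) is the left associator. -/
noncomputable section

open scoped Quaternion

/-- `𝕆m = {pm : p ∈ 𝕆}`. -/
def oMultiples {M : Type*} (sm : Octo → M → M) (m : M) : Set M := {x | ∃ p : Octo, x = sm p m}

section Cyclic

variable {M : Type*} [AddCommGroup M] [Module ℝ M] {sm : Octo → M → M}

theorem isOSubmodule_genSet (m : M) : IsOSubmodule sm (genSet sm m) where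
  zero_mem _ hS := hS.1.zero_mem
  add_mem hx hy S hS := hS.1.add_mem (hx S hS) (hy S hS)
  smul_mem r _ hx S hS := hS.1.smul_mem r (hx S hS)
  osmul_mem p _ hx S hS := hS.1.osmul_mem p (hx S hS)

theorem mem_genSet_self (m : M) : m ∈ genSet sm m := fun _ hS => hS.2

theorem genSet_subset {S : Set M} {m : M} (hS : IsOSubmodule sm S) (hm : m ∈ S) :
    genSet sm m ⊆ S :=
  fun _ hx => hx S ⟨hS, hm⟩

theorem oMultiples_subset_genSet (m : M) : oMultiples sm m ⊆ genSet sm m := by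
  rintro _ ⟨p, rfl⟩
  exact (isOSubmodule_genSet m).osmul_mem p (mem_genSet_self m)

theorem isOCyclic_iff_isOSubmodule (h : IsOMod sm) (m : M) :
    IsOCyclic sm m ↔ IsOSubmodule sm (oMultiples sm m) := by
  refine ⟨fun hc => ?_, fun hS => ?_⟩
  · exact (show genSet sm m = oMultiples sm m from hc) ▸ isOSubmodule_genSet m
  · exact (genSet_subset hS ⟨1, (h.one_smul m).symm⟩).antisymm (oMultiples_subset_genSet m)

namespace IsOMod

theorem sub_smul (h : IsOMod sm) (p q : Octo) (m : M) : sm (p - q) m = sm p m - sm q m := by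
  rw [sub_eq_add_neg, h.add_smul, ← neg_one_smul ℝ q, h.real_smul, neg_one_smul, ← sub_eq_add_neg]

theorem zero_smul (h : IsOMod sm) (m : M) : sm 0 m = 0 := by
  simpa using h.sub_smul 0 0 m

/-- `𝕆m` is always a real subspace; only closure under `𝕆` can fail. -/
theorem isOSubmodule_oMultiples_iff (h : IsOMod sm) (m : M) :
    IsOSubmodule sm (oMultiples sm m) ↔ ∀ p q : Octo, sm p (sm q m) ∈ oMultiples sm m := by
  refine ⟨fun hS p q => hS.osmul_mem p ⟨q, rfl⟩, fun hmul => ?_⟩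
  refine ⟨⟨0, (h.zero_smul m).symm⟩, ?_, ?_, ?_⟩
  · rintro _ _ ⟨p, rfl⟩ ⟨q, rfl⟩
    exact ⟨p + q, (h.add_smul p q m).symm⟩
  · rintro r _ ⟨p, rfl⟩
    exact ⟨r • p, (h.real_smul r p m).symm⟩
  · rintro p _ ⟨q, rfl⟩
    exact hmul p q

/-- Since `p(qm) = (pq)m - [p,q,m]`, the two differ by an element of `𝕆m`. -/
theorem smul_smul_mem_oMultiples_iff (h : IsOMod sm) (p q : Octo) (m : M) :
    sm p (sm q m) ∈ oMultiples sm m ↔ oLassoc sm p q m ∈ oMultiples sm m := by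
  constructor
  · rintro ⟨r, hr⟩
    exact ⟨p * q - r, by rw [oLassoc, hr, h.sub_smul]⟩
  · rintro ⟨r, hr⟩
    refine ⟨p * q - r, ?_⟩
    rw [h.sub_smul, ← hr, oLassoc, sub_sub_cancel]

end IsOMod

end Cyclic

/-- `m` is cyclic iff for all `r, p ∈ 𝕆` there is `q ∈ 𝕆` with `[r,p,m] = qm`. -/
theorem stmt17 {M : Type*} [AddCommGroup M] [Module ℝ M]
    (sm : Octo → M → M) (h : IsOMod sm) (m : M) :
    IsOCyclic sm m ↔ ∀ r p : Octo, ∃ q : Octo, oLassoc sm r p m = sm q m := by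
  rw [isOCyclic_iff_isOSubmodule h, h.isOSubmodule_oMultiples_iff]
  exact forall₂_congr fun r p => h.smul_smul_mem_oMultiples_iff r p m
end
end
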